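/- arXiv:2211.15381 — 2 statements merged into one kernel-verified Lean document; each statement's English description precedes it below -/
import Mathlib

section
/- (Exponential weights regret bound) Let m ≥ 1 and T ≥ 1, and let ℓ : Fin m × Fin T → [0,1] be an arbitrary array of losses. Define weights p_{i,t} = exp(-η Σ_{s<t} ℓ(i,s)) / Σ_j exp(-η Σ_{s<t} ℓ(j,s)) with η = √(8 ln m / T). Then Σ_{t=1}^T Σ_i p_{i,t} ℓ(i,t) - min_{i} Σ_{t=1}^T ℓ(i,t) ≤ √((T/2) ln m). -/
open Real Finset MeasureTheory ProbabilityTheory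

/-!
With `L_j(n)` the cumulative loss of expert `j` before round `n`, the potential
`W_n = ∑_j exp (-η L_j(n))` satisfies `W_{n+1} / W_n = ∑_i p_i(n) exp (-η ℓ_i(n))`, which by
Hoeffding's lemma is at most `exp (-η ⟨p(n), ℓ(n)⟩ + η² / 8)`. Hence
`exp (-η L_i(n)) ≤ W_n ≤ N exp (-η A_n + n η² / 8)`, where `A_n` is the loss of the forecaster,
and taking logarithms gives `A_n - L_i(n) ≤ log N / η + n η / 8`. The choice
`η = √(8 log N / n)` balances the two terms into `√(n / 2 · log N)`.
-/

theorem sum_mul_exp_mul_le_of_mem_Icc {ι : Type*} [Fintype ι] {w X : ι → ℝ} (hw0 : ∀ i, 0 ≤ w i)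
    (hw1 : ∑ i, w i = 1) {a b : ℝ} (hX : ∀ i, X i ∈ Set.Icc a b) (t : ℝ) :
    ∑ i, w i * exp (t * X i) ≤ exp (t * ∑ i, w i * X i + (b - a) ^ 2 * t ^ 2 / 8) := by
  let _ : MeasurableSpace ι := ⊤
  have hw : ∑ i, ENNReal.ofReal (w i) = 1 := by
    rw [← ENNReal.ofReal_sum_of_nonneg fun i _ => hw0 i, hw1, ENNReal.ofReal_one]
  set μ := (PMF.ofFintype _ hw).toMeasure
  have integral_eq (f : ι → ℝ) : ∫ i, f i ∂μ = ∑ i, w i * f i := by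
    simp [μ, PMF.integral_eq_sum, ENNReal.toReal_ofReal (hw0 _)]
  have hoeffding := (hasSubgaussianMGF_of_mem_Icc (μ := μ) (Measurable.of_discrete).aemeasurable
    (ae_of_all _ hX)).mgf_le t
  rw [mgf, integral_eq, integral_eq] at hoeffding
  set m := ∑ i, w i * X i
  calc ∑ i, w i * exp (t * X i) = exp (t * m) * ∑ i, w i * exp (t * (X i - m)) := by
        simp only [mul_sub, exp_sub, mul_sum]
        exact sum_congr rfl fun i _ => by field_simp
    _ ≤ exp (t * m) * exp ((b - a) ^ 2 * t ^ 2 / 8) := by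
        gcongr
        refine hoeffding.trans_eq (congrArg exp ?_)
        push_cast
        rw [norm_eq_abs, div_pow, sq_abs]
        ring
    _ = _ := (exp_add _ _).symm

noncomputable section

namespace ExpWeights

variable {ι : Type*} [Fintype ι] (η : ℝ) (ℓ : ι → ℕ → ℝ)

def cumLoss (i : ι) (n : ℕ) : ℝ := ∑ s ∈ range n, ℓ i s

def potential (n : ℕ) : ℝ := ∑ j, exp (-η * cumLoss ℓ j n)

def weight (i : ι) (n : ℕ) : ℝ := exp (-η * cumLoss ℓ i n) / potential η ℓ n

def mixLoss (n : ℕ) : ℝ := ∑ i, weight η ℓ i n * ℓ i n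

lemma potential_pos [Nonempty ι] (n : ℕ) : 0 < potential η ℓ n :=
  sum_pos (fun _ _ => exp_pos _) univ_nonempty

lemma weight_nonneg (i : ι) (n : ℕ) : 0 ≤ weight η ℓ i n :=
  div_nonneg (exp_pos _).le (sum_nonneg fun _ _ => (exp_pos _).le)

lemma sum_weight [Nonempty ι] (n : ℕ) : ∑ i, weight η ℓ i n = 1 := by
  simp only [weight]
  rw [← sum_div, ← potential, div_self (potential_pos η ℓ n).ne']

lemma potential_zero : potential η ℓ 0 = Fintype.card ι := by
  simp [potential, cumLoss]

lemma potential_succ [Nonempty ι] (n : ℕ) :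
    potential η ℓ (n + 1) = potential η ℓ n * ∑ i, weight η ℓ i n * exp (-η * ℓ i n) := by
  have := (potential_pos η ℓ n).ne'
  simp only [potential, cumLoss, weight, sum_range_succ, mul_add, exp_add, mul_sum]
  exact sum_congr rfl fun i _ => by field_simp

lemma potential_succ_le [Nonempty ι] (n : ℕ) (hℓ : ∀ i, ℓ i n ∈ Set.Icc 0 1) :
    potential η ℓ (n + 1) ≤ potential η ℓ n * exp (-η * mixLoss η ℓ n + η ^ 2 / 8) := by
  rw [potential_succ]
  gcongr
  · exact (potential_pos η ℓ n).le
  · simpa [mixLoss] using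
      sum_mul_exp_mul_le_of_mem_Icc (weight_nonneg η ℓ · n) (sum_weight η ℓ n) hℓ (-η)

lemma potential_le [Nonempty ι] (hℓ : ∀ i n, ℓ i n ∈ Set.Icc 0 1) (n : ℕ) :
    potential η ℓ n ≤
      Fintype.card ι * exp (-η * ∑ k ∈ range n, mixLoss η ℓ k + n * η ^ 2 / 8) := by
  induction n with
  | zero => simp [potential_zero]
  | succ n ih =>
    calc potential η ℓ (n + 1)
        ≤ potential η ℓ n * exp (-η * mixLoss η ℓ n + η ^ 2 / 8) :=
          potential_succ_le η ℓ n (hℓ · n)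
      _ ≤ Fintype.card ι * exp (-η * ∑ k ∈ range n, mixLoss η ℓ k + n * η ^ 2 / 8) *
            exp (-η * mixLoss η ℓ n + η ^ 2 / 8) := by gcongr
      _ = _ := by
          rw [mul_assoc, ← exp_add, sum_range_succ]
          push_cast
          ring_nf

lemma exp_neg_mul_cumLoss_le_potential (i : ι) (n : ℕ) :
    exp (-η * cumLoss ℓ i n) ≤ potential η ℓ n :=
  single_le_sum (f := fun j => exp (-η * cumLoss ℓ j n)) (fun _ _ => (exp_pos _).le)
    (mem_univ i)

theorem regret_le (hη : 0 < η) (hℓ : ∀ i n, ℓ i n ∈ Set.Icc 0 1) (i : ι) (n : ℕ) :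
    ∑ k ∈ range n, mixLoss η ℓ k - cumLoss ℓ i n ≤ log (Fintype.card ι) / η + n * η / 8 := by
  have : Nonempty ι := ⟨i⟩
  have hbound := (exp_neg_mul_cumLoss_le_potential η ℓ i n).trans (potential_le η ℓ hℓ n)
  rw [← exp_log (Nat.cast_pos.2 Fintype.card_pos), ← exp_add, exp_le_exp] at hbound
  rw [div_add' _ _ _ hη.ne', le_div_iff₀ hη]
  linarith

lemma sum_mixLoss_eq_cumLoss [Subsingleton ι] (i : ι) (n : ℕ) :
    ∑ k ∈ range n, mixLoss η ℓ k = cumLoss ℓ i n := by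
  have : Nonempty ι := ⟨i⟩
  have hweight (k : ℕ) : weight η ℓ i k = 1 := by
    simpa [Fintype.sum_subsingleton _ i] using sum_weight η ℓ k
  simp [mixLoss, cumLoss, Fintype.sum_subsingleton _ i, hweight]

theorem regret_le_sqrt (hℓ : ∀ i n, ℓ i n ∈ Set.Icc 0 1) (i : ι) {n : ℕ} (hn : 0 < n)
    (hη : η = √(8 * log (Fintype.card ι) / n)) :
    ∑ k ∈ range n, mixLoss η ℓ k - cumLoss ℓ i n ≤ √(n / 2 * log (Fintype.card ι)) := by
  have : Nonempty ι := ⟨i⟩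
  rcases (Nat.one_le_iff_ne_zero.2 (Fintype.card_ne_zero (α := ι))).eq_or_lt with hcard | hcard
  · have : Subsingleton ι := Fintype.card_le_one_iff_subsingleton.1 hcard.ge
    -- here `η = 0`, so `regret_le` is unavailable, but the only weight is `1`
    rw [sum_mixLoss_eq_cumLoss η ℓ i, sub_self]
    exact sqrt_nonneg _
  have hlog : 0 < log (Fintype.card ι) := log_pos (by exact_mod_cast hcard)
  have hn' : (0 : ℝ) < n := by exact_mod_cast hn
  have hη2 : η ^ 2 = 8 * log (Fintype.card ι) / n := by rw [hη, sq_sqrt (by positivity)]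
  have hηpos : 0 < η := by rw [hη]; positivity
  calc ∑ k ∈ range n, mixLoss η ℓ k - cumLoss ℓ i n
      ≤ log (Fintype.card ι) / η + n * η / 8 := regret_le η ℓ hηpos hℓ i n
    _ = √((n * η / 4) ^ 2) := by
        rw [sqrt_sq (by positivity)]
        field_simp
        rw [hη2]
        field_simp
        ring
    _ = √(n / 2 * log (Fintype.card ι)) := by
        congr 1
        rw [div_pow, mul_pow, hη2]
        field_simp
        ring

end ExpWeights

end

theorem Fin.sum_Iio_eq_sum_range_extend {M : Type*} [AddCommMonoid M] {T : ℕ} (f : Fin T → M)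
    (t : Fin T) : ∑ s ∈ Iio t, f s = ∑ n ∈ range t, Function.extend Fin.val f 0 n := by
  rw [← Nat.Iio_eq_range, ← Fin.map_valEmbedding_Iio, sum_map]
  exact sum_congr rfl fun s _ => (Fin.val_injective.extend_apply f 0 s).symm

open ExpWeights

theorem exp_weights_regret (m T : ℕ) (hm : 1 ≤ m) (hT : 1 ≤ T)
    (ℓ : Fin m → Fin T → ℝ) (hℓ0 : ∀ i t, 0 ≤ ℓ i t) (hℓ1 : ∀ i t, ℓ i t ≤ 1)
    (η : ℝ) (hη : η = Real.sqrt (8 * Real.log m / T))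
    (p : Fin m → Fin T → ℝ)
    (hp : ∀ i t, p i t =
      Real.exp (-η * ∑ s ∈ Finset.Iio t, ℓ i s) /
        ∑ j, Real.exp (-η * ∑ s ∈ Finset.Iio t, ℓ j s)) :
    (∑ t, ∑ i, p i t * ℓ i t) -
        Finset.univ.inf' ⟨⟨0, hm⟩, Finset.mem_univ _⟩ (fun i => ∑ t, ℓ i t) ≤
      Real.sqrt ((T / 2) * Real.log m) := by
  set L : Fin m → ℕ → ℝ := fun i => Function.extend Fin.val (ℓ i) 0
  have hL (i : Fin m) (t : Fin T) : L i t = ℓ i t := Fin.val_injective.extend_apply _ _ _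
  have hL01 (i : Fin m) (n : ℕ) : L i n ∈ Set.Icc 0 1 := by
    by_cases hn : ∃ t : Fin T, t.val = n
    · obtain ⟨t, rfl⟩ := hn
      exact hL i t ▸ ⟨hℓ0 i t, hℓ1 i t⟩
    · simp [L, Function.extend_apply' _ _ _ hn]
  have hsum (i : Fin m) : ∑ t, ℓ i t = cumLoss L i T := by
    simp only [cumLoss, ← Fin.sum_univ_eq_sum_range, hL]
  have hweight (i : Fin m) (t : Fin T) : p i t = weight η L i t := by
    simp only [hp, weight, potential, cumLoss, Fin.sum_Iio_eq_sum_range_extend, L]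
  obtain ⟨i, -, hi⟩ := exists_mem_eq_inf' ⟨⟨0, hm⟩, mem_univ _⟩ fun i => ∑ t, ℓ i t
  have hcard : (Fintype.card (Fin m) : ℝ) = m := by rw [Fintype.card_fin]
  calc (∑ t, ∑ i, p i t * ℓ i t) - univ.inf' _ (fun i => ∑ t, ℓ i t)
      = ∑ k ∈ range T, mixLoss η L k - cumLoss L i T := by
        rw [hi, hsum]
        simp only [mixLoss, ← Fin.sum_univ_eq_sum_range, hweight, hL]
    _ ≤ √(T / 2 * log (Fintype.card (Fin m))) :=
        regret_le_sqrt η L hL01 i hT (by rw [hη, hcard])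
    _ = √(T / 2 * log m) := by rw [hcard]
end

section
/- (Anytime regret bound with time-varying learning rate) Let m ≥ 2 and losses ℓ(i,t) ∈ [0,1] for i ∈ {1,...,m}, t ∈ {1,...,T}. Define p_{i,t} = exp(-η_t Σ_{s<t} ℓ(i,s)) / Σ_j exp(-η_t Σ_{s<t} ℓ(j,s)) with η_t = √(8 ln m / t). Then Σ_{t=1}^T Σ_i p_{i,t} ℓ(i,t) - min_i Σ_{t=1}^T ℓ(i,t) ≤ 2√((T/2) ln m) + √((ln m)/8). -/
/-!
Let `L_t` be the vector of cumulative losses before round `t` and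
`Φ_t = -(1/η_t) log ((1/m) ∑ᵢ exp (-η_t L_{i,t}))`. Hoeffding's lemma bounds the forecaster's loss
in round `t` by the increase of the potential at the fixed rate `η_t`, plus `η_t / 8`. The potential
is antitone in the rate (power-mean inequality), so for decreasing rates the bounds telescope to
`Φ_T + ∑_{t<T} η_t / 8`, and `Φ_T ≤ min_i L_{i,T} + log m / η_T`. For `η_t = √(8 log m / (t+1))`
this gives `√((T+1) log m / 8) + √(T log m / 2)`, since `∑_{t<T} 1/√(t+1) ≤ 2√T`.
-/

open MeasureTheory ProbabilityTheory Real Finset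

lemma integral_sum_smul_dirac {ι : Type*} [Fintype ι] [MeasurableSpace ι]
    [MeasurableSingletonClass ι] {p : ι → ℝ} (hp : ∀ i, 0 ≤ p i) (f : ι → ℝ) :
    ∫ i, f i ∂(∑ j, ENNReal.ofReal (p j) • Measure.dirac j) = ∑ j, p j * f j := by
  rw [integral_finsetSum_measure fun j _ => Integrable.of_finite.smul_measure ENNReal.ofReal_ne_top]
  simp [integral_smul_measure, integral_dirac, hp]

/-- Hoeffding's lemma for a finitely supported distribution. -/
theorem sum_mul_exp_le_of_mem_Icc {ι : Type*} [Fintype ι] {p x : ι → ℝ} {a b : ℝ}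
    (hp : ∀ i, 0 ≤ p i) (hp1 : ∑ i, p i = 1) (hx : ∀ i, x i ∈ Set.Icc a b) (s : ℝ) :
    ∑ i, p i * exp (s * x i) ≤ exp (s * ∑ i, p i * x i + (b - a) ^ 2 * s ^ 2 / 8) := by
  let : MeasurableSpace ι := ⊤
  set μ : Measure ι := ∑ j, ENNReal.ofReal (p j) • Measure.dirac j
  have : IsProbabilityMeasure μ := ⟨by
    simp [μ, ← ENNReal.ofReal_sum_of_nonneg fun j _ => hp j, hp1]⟩
  have hsub := (hasSubgaussianMGF_of_mem_Icc (μ := μ) (X := x) (a := a) (b := b)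
    Measurable.of_discrete.aemeasurable (ae_of_all _ hx)).mgf_le s
  have hmean : μ[x] = ∑ i, p i * x i := integral_sum_smul_dirac hp x
  have hmgf : mgf x μ s = ∑ i, p i * exp (s * x i) := integral_sum_smul_dirac hp _
  simp only [sub_eq_add_neg, mgf_add_const, hmgf, hmean] at hsub
  have hc : (((‖b + -a‖₊ / 2) ^ 2 : NNReal) : ℝ) = (b - a) ^ 2 / 4 := by
    simp [div_pow, ← sub_eq_add_neg]
    ring
  rw [hc, ← le_div_iff₀ (exp_pos _), ← exp_sub] at hsub
  exact hsub.trans_eq (by ring_nf)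

section ExpWeights

variable {ι : Type*} [Fintype ι]

noncomputable def expWeights (η : ℝ) (L : ι → ℝ) (i : ι) : ℝ :=
  exp (-η * L i) / ∑ j, exp (-η * L j)

noncomputable def softMin (η : ℝ) (L : ι → ℝ) : ℝ :=
  -log (∑ i, (Fintype.card ι : ℝ)⁻¹ * exp (-η * L i)) / η

lemma expWeights_nonneg (η : ℝ) (L : ι → ℝ) (i : ι) : 0 ≤ expWeights η L i := by
  unfold expWeights; positivity

lemma sum_expWeights [Nonempty ι] (η : ℝ) (L : ι → ℝ) : ∑ i, expWeights η L i = 1 := by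
  simp only [expWeights]
  rw [← sum_div, div_self (sum_pos (fun i _ => exp_pos _) univ_nonempty).ne']

lemma softMin_zero [Nonempty ι] (η : ℝ) : softMin η (0 : ι → ℝ) = 0 := by
  simp [softMin]

lemma softMin_le_add_log_card_div [Nonempty ι] {η : ℝ} (hη : 0 < η) (L : ι → ℝ) (i : ι) :
    softMin η L ≤ L i + log (Fintype.card ι) / η := by
  have hcard : (0 : ℝ) < Fintype.card ι := by exact_mod_cast Fintype.card_pos
  have hsingle : (Fintype.card ι : ℝ)⁻¹ * exp (-η * L i) ≤
      ∑ j, (Fintype.card ι : ℝ)⁻¹ * exp (-η * L j) :=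
    single_le_sum (f := fun j => (Fintype.card ι : ℝ)⁻¹ * exp (-η * L j))
      (fun j _ => by positivity) (mem_univ i)
  have hlog := log_le_log (by positivity) hsingle
  rw [log_mul (by positivity) (exp_pos _).ne', log_inv, log_exp] at hlog
  rw [softMin, div_le_iff₀ hη, add_mul, div_mul_cancel₀ _ hη.ne']
  linarith

/-- By the power-mean inequality with exponent `b / a ≥ 1`. -/
lemma softMin_le_softMin [Nonempty ι] {a b : ℝ} (ha : 0 < a) (hab : a ≤ b) (L : ι → ℝ) :
    softMin b L ≤ softMin a L := by
  have hb : 0 < b := ha.trans_le hab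
  rw [softMin, softMin, div_le_div_iff₀ hb ha]
  set w : ℝ := (Fintype.card ι : ℝ)⁻¹
  have hw : 0 < w := by positivity
  have hmean := rpow_arith_mean_le_arith_mean_rpow univ (fun _ => w) (fun i => exp (-a * L i))
    (fun _ _ => hw.le) (by simp [w]) (fun i _ => (exp_pos _).le)
    ((one_le_div ha).2 hab)
  have hpow : ∀ i, exp (-a * L i) ^ (b / a) = exp (-b * L i) := fun i => by
    rw [← exp_mul]; congr 1; field_simp
  simp only [hpow] at hmean
  have hlog := log_le_log (by positivity) hmean
  rw [log_rpow (by positivity)] at hlog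
  rw [div_mul_eq_mul_div, div_le_iff₀ ha] at hlog
  linarith

lemma sum_expWeights_mul_le [Nonempty ι] {η : ℝ} (hη : 0 < η) (L x : ι → ℝ)
    (hx : ∀ i, x i ∈ Set.Icc 0 1) :
    ∑ i, expWeights η L i * x i ≤ softMin η (L + x) - softMin η L + η / 8 := by
  rw [softMin, softMin, ← sub_div, div_add' _ _ _ hη.ne', le_div_iff₀ hη]
  set w : ℝ := (Fintype.card ι : ℝ)⁻¹
  have hw : 0 < w := by positivity
  have hratio : ∑ i, expWeights η L i * exp (-η * x i) =
      (∑ i, w * exp (-η * (L + x) i)) / ∑ i, w * exp (-η * L i) := by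
    rw [← mul_sum, ← mul_sum, mul_div_mul_left _ _ hw.ne', sum_div]
    refine sum_congr rfl fun i _ => ?_
    rw [expWeights, div_mul_eq_mul_div, ← exp_add, Pi.add_apply, mul_add]
  have hhoeffding := sum_mul_exp_le_of_mem_Icc (expWeights_nonneg η L) (sum_expWeights η L) hx (-η)
  rw [hratio] at hhoeffding
  have hlog := log_le_log (div_pos (by positivity) (by positivity)) hhoeffding
  rw [log_exp, log_div (by positivity) (by positivity)] at hlog
  linarith

theorem sum_range_sum_expWeights_mul_le [Nonempty ι] {η : ℕ → ℝ} (hη : ∀ t, 0 < η t)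
    (hη_anti : Antitone η) (ℓ : ι → ℕ → ℝ) (hℓ : ∀ i t, ℓ i t ∈ Set.Icc 0 1) (T : ℕ) (i : ι) :
    ∑ t ∈ range T, ∑ j, expWeights (η t) (fun k => ∑ s ∈ range t, ℓ k s) j * ℓ j t ≤
      ∑ t ∈ range T, ℓ i t + log (Fintype.card ι) / η T + ∑ t ∈ range T, η t / 8 := by
  set cum : ℕ → ι → ℝ := fun t k => ∑ s ∈ range t, ℓ k s
  have hstep : ∀ t, ∑ j, expWeights (η t) (cum t) j * ℓ j t ≤
      softMin (η (t + 1)) (cum (t + 1)) - softMin (η t) (cum t) + η t / 8 := by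
    intro t
    have hcum : cum (t + 1) = cum t + fun k => ℓ k t := by
      ext k; simp only [cum, sum_range_succ, Pi.add_apply]
    have hround := sum_expWeights_mul_le (hη t) (cum t) (fun k => ℓ k t) (fun k => hℓ k t)
    have hrate := softMin_le_softMin (hη (t + 1)) (hη_anti t.le_succ) (cum (t + 1))
    rw [hcum] at hrate ⊢
    linarith
  have hcum_zero : cum 0 = 0 := by ext k; simp [cum]
  calc _ ≤ ∑ t ∈ range T,
        (softMin (η (t + 1)) (cum (t + 1)) - softMin (η t) (cum t) + η t / 8) :=
        sum_le_sum fun t _ => hstep t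
    _ = softMin (η T) (cum T) + ∑ t ∈ range T, η t / 8 := by
        rw [sum_add_distrib, sum_range_sub (fun t => softMin (η t) (cum t)), hcum_zero,
          softMin_zero, sub_zero]
    _ ≤ _ := by linarith [softMin_le_add_log_card_div (hη T) (cum T) i]

end ExpWeights

lemma sum_range_sqrt_div_succ_le {c : ℝ} (hc : 0 ≤ c) (T : ℕ) :
    ∑ t ∈ range T, √(c / (t + 1)) ≤ 2 * √(c * T) := by
  induction T with
  | zero => simp
  | succ n ih =>
    rw [sqrt_mul hc] at ih
    rw [sum_range_succ, sqrt_div hc, sqrt_mul hc]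
    have ha : 0 ≤ √(n : ℝ) := sqrt_nonneg _
    have hb : 0 < √((n : ℝ) + 1) := sqrt_pos.2 (by positivity)
    have hsq : √((n : ℝ) + 1) ^ 2 - √(n : ℝ) ^ 2 = 1 := by
      rw [sq_sqrt (by positivity), sq_sqrt (by positivity)]; ring
    have hinv : 1 / √((n : ℝ) + 1) ≤ 2 * (√((n : ℝ) + 1) - √(n : ℝ)) := by
      rw [div_le_iff₀ hb]
      nlinarith [mul_nonneg ha hb.le]
    push_cast
    have hstep := mul_le_mul_of_nonneg_left hinv (sqrt_nonneg c)
    rw [mul_one_div] at hstep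
    linarith

lemma Fin.sum_Iio_eq_sum_range {M : Type*} [AddCommMonoid M] {T : ℕ} (g : ℕ → M) (t : Fin T) :
    ∑ s ∈ Iio t, g s = ∑ s ∈ range t, g s := by
  rw [← Nat.Iio_eq_range, ← Fin.map_valEmbedding_Iio, sum_map, Fin.valEmbedding_apply]

lemma div_sqrt_add_sum_range_sqrt_div_le {l : ℝ} (hl : 0 < l) (T : ℕ) :
    l / √(8 * l / (T + 1)) + ∑ t ∈ range T, √(8 * l / (t + 1)) / 8 ≤
      2 * √((T / 2) * l) + √(l / 8) := by
  have hlast : l / √(8 * l / (T + 1)) = √((T + 1) * l / 8) := by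
    rw [div_eq_iff (sqrt_pos.2 (by positivity)).ne', ← sqrt_mul (by positivity),
      show (T + 1) * l / 8 * (8 * l / (T + 1)) = l ^ 2 by field_simp, sqrt_sq hl.le]
  have hlast_le : √((T + 1) * l / 8) ≤ √((T / 2) * l) + √(l / 8) := by
    rw [sqrt_le_left (by positivity)]
    nlinarith [sq_sqrt (by positivity : (0 : ℝ) ≤ T / 2 * l),
      sq_sqrt (by positivity : (0 : ℝ) ≤ l / 8),
      mul_nonneg (sqrt_nonneg ((T / 2) * l)) (sqrt_nonneg (l / 8))]
  have hsqrt : √(8 * l * T) = 4 * √((T / 2) * l) := by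
    rw [show 8 * l * T = 4 ^ 2 * ((T / 2) * l) by ring, sqrt_mul (by positivity),
      sqrt_sq (by norm_num)]
  have hrates := sum_range_sqrt_div_succ_le (by positivity : 0 ≤ 8 * l) T
  rw [← sum_div, hlast]
  linarith

theorem exp_weights_anytime_regret (m T : ℕ) (hm : 2 ≤ m)
    (ℓ : Fin m → Fin T → ℝ) (hℓ0 : ∀ i t, 0 ≤ ℓ i t) (hℓ1 : ∀ i t, ℓ i t ≤ 1)
    (η : Fin T → ℝ) (hη : ∀ t, η t = Real.sqrt (8 * Real.log m / ((t : ℕ) + 1)))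
    (p : Fin m → Fin T → ℝ)
    (hp : ∀ i t, p i t =
      Real.exp (-η t * ∑ s ∈ Finset.Iio t, ℓ i s) /
        ∑ j, Real.exp (-η t * ∑ s ∈ Finset.Iio t, ℓ j s)) :
    (∑ t, ∑ i, p i t * ℓ i t) -
        Finset.univ.inf' ⟨⟨0, by omega⟩, Finset.mem_univ _⟩ (fun i => ∑ t, ℓ i t) ≤
      2 * Real.sqrt ((T / 2) * Real.log m) + Real.sqrt (Real.log m / 8) := by
  have : NeZero m := ⟨by omega⟩
  have hlog : 0 < log m := log_pos (by exact_mod_cast hm)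
  set L : Fin m → ℕ → ℝ := fun i n => if h : n < T then ℓ i ⟨n, h⟩ else 0
  have hL : ∀ i t, L i t ∈ Set.Icc 0 1 := fun i t => by
    by_cases h : t < T <;> simp [L, h, hℓ0, hℓ1]
  have hLℓ : ∀ i (t : Fin T), ℓ i t = L i t := by simp [L]
  set η' : ℕ → ℝ := fun t => √(8 * log m / (t + 1))
  have hη'_pos : ∀ t, 0 < η' t := fun t => sqrt_pos.2 (by positivity)
  have hη'_anti : Antitone η' := fun s t hst =>
    sqrt_le_sqrt (div_le_div_of_nonneg_left (by positivity) (by positivity) (by gcongr))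
  have hforecaster : ∑ t, ∑ i, p i t * ℓ i t = ∑ t ∈ range T,
      ∑ i, expWeights (η' t) (fun k => ∑ s ∈ range t, L k s) i * L i t := by
    rw [← Fin.sum_univ_eq_sum_range]
    refine sum_congr rfl fun t _ => sum_congr rfl fun i _ => ?_
    simp only [hp, hη, hLℓ, Fin.sum_Iio_eq_sum_range, expWeights, η']
  obtain ⟨i₀, -, hi₀⟩ := exists_mem_eq_inf' univ_nonempty (fun i => ∑ t, ℓ i t)
  have hbest : ∑ t, ℓ i₀ t = ∑ t ∈ range T, L i₀ t := by
    simp only [hLℓ, Fin.sum_univ_eq_sum_range (L i₀)]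
  rw [hi₀, hbest, hforecaster]
  have hregret := sum_range_sum_expWeights_mul_le hη'_pos hη'_anti L hL T i₀
  rw [Fintype.card_fin] at hregret
  linarith [div_sqrt_add_sum_range_sqrt_div_le hlog T]
end
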